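/- arXiv:2206.10832 — 2 statements merged into one kernel-verified Lean document; each statement's English description precedes it below -/
import Mathlib

section
/- Let x* be a stationary point of min_{x∈C} ½‖Ax - b‖² with multiplier γ (i.e., Aᵀ(A x* - b) = (diag(γ)⊗I_2) x*, x* ∈ C), Z = Σ_i e_i e_iᵀ ⊗ v_i with v_i = [-x*_{2i}, x*_{2i-1}]ᵀ, and H = Zᵀ Aᵀ A Z - diag(γ). If H is positive definite, then x* is a strict local minimum of the constrained problem. -/
open Matrix

/-- Euclidean norm on `ℝ^{2N}`-like spaces. -/
noncomputable def vecNorm {ι : Type*} [Fintype ι] (y : ι → ℝ) : ℝ :=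
  Real.sqrt (∑ p, y p ^ 2)

/-- The tangent basis matrix `Z = Σᵢ eᵢ eᵢᵀ ⊗ vᵢ` with `vᵢ = [-x_{2i}, x_{2i-1}]ᵀ`. -/
def tangentZmat {N : ℕ} (x : Fin N × Fin 2 → ℝ) : Matrix (Fin N × Fin 2) (Fin N) ℝ :=
  fun p j => if p.1 = j then (if p.2 = 0 then -x (j, 1) else x (j, 0)) else 0

/-! With `d = y - x`, stationarity turns the objective into an exact quadratic:
`‖Ay - b‖² - ‖Ax - b‖² = dᵀ (AᵀA - Γ) d`, since `|y_i|² = |x_i|² = 1` gives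
`2 ⟪x_i, d_i⟫ = -|d_i|²` in each block. On the circles the normal part `d - ZZᵀd` of `d` has
size `O(‖d‖²)`, and on the tangential part `ZZᵀd` (of size `≈ ‖d‖`) the form equals
`(Zᵀd)ᵀ H (Zᵀd) ≥ c ‖Zᵀd‖²` because `Z` has orthonormal columns and `ZᵀΓZ = diag γ`. The cross
terms are `O(‖d‖³)`, so the quadratic is positive for small `d ≠ 0`. -/

open scoped RealInnerProductSpace

theorem EuclideanSpace.norm_toLp_sq {n : Type*} [Fintype n] (s : n → ℝ) :
    ‖WithLp.toLp 2 s‖ ^ 2 = s ⬝ᵥ s := by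
  rw [EuclideanSpace.real_norm_sq_eq]; simp [dotProduct, sq]

theorem vecNorm_eq_norm_toLp {ι : Type*} [Fintype ι] (v : ι → ℝ) :
    vecNorm v = ‖WithLp.toLp 2 v‖ := by
  rw [EuclideanSpace.norm_eq]; simp [vecNorm]

theorem vecNorm_sq {ι : Type*} [Fintype ι] (v : ι → ℝ) : vecNorm v ^ 2 = v ⬝ᵥ v := by
  rw [vecNorm_eq_norm_toLp, EuclideanSpace.norm_toLp_sq]

theorem vecNorm_nonneg {ι : Type*} [Fintype ι] (v : ι → ℝ) : 0 ≤ vecNorm v :=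
  Real.sqrt_nonneg _

theorem dotProduct_self_eq_sum_sq {ι : Type*} [Fintype ι] (v : ι → ℝ) :
    v ⬝ᵥ v = ∑ p, v p ^ 2 := by
  simp [dotProduct, sq]

theorem mulVec_dotProduct_mulVec_mulVec {α m n : Type*} [CommSemiring α] [Fintype m]
    [Fintype n] (Z : Matrix m n α) (L : Matrix m m α) (s : n → α) :
    Z *ᵥ s ⬝ᵥ (L *ᵥ (Z *ᵥ s)) = s ⬝ᵥ ((Zᵀ * L * Z) *ᵥ s) := by
  rw [← mulVec_mulVec, ← mulVec_mulVec, dotProduct_mulVec s, vecMul_transpose]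

theorem residual_dotProduct_self_eq_add {m n : Type*} [Fintype m] [Fintype n] [DecidableEq n]
    (A : Matrix m n ℝ) (b : m → ℝ) (g : n → ℝ) {x y : n → ℝ}
    (hstat : Aᵀ *ᵥ (A *ᵥ x - b) = diagonal g *ᵥ x)
    (hy : y ⬝ᵥ (diagonal g *ᵥ y) = x ⬝ᵥ (diagonal g *ᵥ x)) :
    (A *ᵥ y - b) ⬝ᵥ (A *ᵥ y - b) =
      (A *ᵥ x - b) ⬝ᵥ (A *ᵥ x - b) + (y - x) ⬝ᵥ ((Aᵀ * A - diagonal g) *ᵥ (y - x)) := by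
  set d := y - x
  have hyd : y = x + d := by simp [d]
  have hres : A *ᵥ y - b = (A *ᵥ x - b) + A *ᵥ d := by rw [hyd, mulVec_add]; abel
  have hcross : (A *ᵥ x - b) ⬝ᵥ (A *ᵥ d) = diagonal g *ᵥ x ⬝ᵥ d := by
    rw [dotProduct_mulVec, ← mulVec_transpose, hstat]
  have hsymm : x ⬝ᵥ (diagonal g *ᵥ d) = diagonal g *ᵥ x ⬝ᵥ d := by
    rw [dotProduct_mulVec, ← mulVec_transpose, diagonal_transpose]
  have hquad : A *ᵥ d ⬝ᵥ (A *ᵥ d) = d ⬝ᵥ ((Aᵀ * A) *ᵥ d) := by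
    rw [dotProduct_mulVec, ← mulVec_transpose, mulVec_mulVec, dotProduct_comm]
  rw [hyd, mulVec_add, add_dotProduct, dotProduct_add, dotProduct_add, hsymm,
    dotProduct_comm d (diagonal g *ᵥ x)] at hy
  rw [hres, add_dotProduct, dotProduct_add, dotProduct_add, dotProduct_comm (A *ᵥ d), hcross,
    hquad, sub_mulVec, dotProduct_sub d]
  linarith

theorem exists_pos_mul_norm_sq_le_of_homogeneous {E : Type*} [NormedAddCommGroup E]
    [NormedSpace ℝ E] [FiniteDimensional ℝ E] {q : E → ℝ} (hq : Continuous q)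
    (hsmul : ∀ (c : ℝ) v, q (c • v) = c ^ 2 * q v) (hpos : ∀ v ≠ 0, 0 < q v) :
    ∃ c > 0, ∀ v, c * ‖v‖ ^ 2 ≤ q v := by
  have hq0 : q 0 = 0 := by simpa using hsmul 0 0
  rcases subsingleton_or_nontrivial E with hE | hE
  · exact ⟨1, one_pos, fun v => by simp [Subsingleton.elim v 0, hq0]⟩
  obtain ⟨v₀, hv₀, hmin⟩ := (isCompact_sphere (0 : E) 1).exists_isMinOn
    (NormedSpace.sphere_nonempty.2 zero_le_one) hq.continuousOn
  have hv₀ : ‖v₀‖ = 1 := by simpa using hv₀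
  refine ⟨q v₀, hpos v₀ (norm_ne_zero_iff.1 (by simp [hv₀])), fun v => ?_⟩
  rcases eq_or_ne v 0 with rfl | hv
  · simp [hq0]
  have hnv : ‖v‖ ≠ 0 := norm_ne_zero_iff.2 hv
  have hunit : ‖v‖⁻¹ • v ∈ Metric.sphere (0 : E) 1 := by
    simp [norm_smul, hnv]
  calc q v₀ * ‖v‖ ^ 2 ≤ q (‖v‖⁻¹ • v) * ‖v‖ ^ 2 := by gcongr; exact hmin hunit
    _ = q v := by rw [hsmul, inv_pow]; field_simp

theorem Matrix.PosDef.exists_pos_mul_dotProduct_self_le {n : Type*} [Fintype n]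
    {H : Matrix n n ℝ} (hH : H.PosDef) :
    ∃ c > 0, ∀ s : n → ℝ, c * (s ⬝ᵥ s) ≤ s ⬝ᵥ (H *ᵥ s) := by
  obtain ⟨c, hc, hle⟩ := exists_pos_mul_norm_sq_le_of_homogeneous
    (E := EuclideanSpace ℝ n) (q := fun v => WithLp.ofLp v ⬝ᵥ (H *ᵥ WithLp.ofLp v))
    (by fun_prop)
    (fun c v => by
      simp only [WithLp.ofLp_smul, mulVec_smul, smul_dotProduct, dotProduct_smul, smul_eq_mul]
      ring)
    (fun v hv => by simpa using hH.dotProduct_mulVec_pos (x := WithLp.ofLp v) (by simpa using hv))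
  refine ⟨c, hc, fun s => ?_⟩
  simpa [EuclideanSpace.norm_toLp_sq] using hle (WithLp.toLp 2 s)

theorem ContinuousLinearMap.exists_inner_map_self_pos_of_norm_sub_le_sq {E : Type*}
    [NormedAddCommGroup E] [InnerProductSpace ℝ E] (T : E →L[ℝ] E) {c : ℝ} (hc : 0 < c) :
    ∃ ε > 0, ∀ d u : E, c * ‖u‖ ^ 2 ≤ ⟪u, T u⟫ → ‖d - u‖ ≤ ‖d‖ ^ 2 → d ≠ 0 → ‖d‖ < ε →
      0 < ⟪d, T d⟫ := by
  have hbound : ∀ a b : E, |⟪a, T b⟫| ≤ ‖T‖ * (‖a‖ * ‖b‖) := fun a b =>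
    (abs_real_inner_le_norm a (T b)).trans <| by
      nlinarith [T.le_opNorm b, norm_nonneg a, norm_nonneg b, norm_nonneg T]
  -- for `‖d‖ = δ < 1/2` the norm of `u` lies in `[δ/2, 2δ]`, so the form at `u` is at least
  -- `c δ² / 4` while the two cross terms are at most `3 ‖T‖ δ³`
  refine ⟨min (1 / 2) (c / (12 * ‖T‖ + 1)), by positivity, fun d u hu hdu hd hlt => ?_⟩
  set δ := ‖d‖
  have hδ : 0 < δ := norm_pos_iff.2 hd
  have hδ2 : δ < 1 / 2 := (lt_min_iff.1 hlt).1
  have hδc : (12 * ‖T‖ + 1) * δ < c := by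
    have := (lt_min_iff.1 hlt).2
    rwa [lt_div_iff₀ (by positivity), mul_comm] at this
  have hsplit : ⟪d, T d⟫ = ⟪u, T u⟫ + ⟪d - u, T d⟫ + ⟪u, T (d - u)⟫ := by
    simp only [map_sub, inner_sub_left, inner_sub_right]; ring
  have hw : ‖d - u‖ ≤ δ ^ 2 := hdu
  have hdist := abs_le.1 (abs_norm_sub_norm_le d u)
  have hu_le : ‖u‖ ≤ 2 * δ := by nlinarith
  have hu_ge : δ / 2 ≤ ‖u‖ := by nlinarith
  have h1 := hbound (d - u) d
  have h2 := hbound u (d - u)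
  have hnT := norm_nonneg T
  have herr : |⟪d - u, T d⟫| + |⟪u, T (d - u)⟫| ≤ 3 * ‖T‖ * δ ^ 3 := by
    have : ‖T‖ * (‖d - u‖ * δ) + ‖T‖ * (‖u‖ * ‖d - u‖) ≤ 3 * ‖T‖ * δ ^ 3 := by
      have : ‖d - u‖ * (δ + ‖u‖) ≤ δ ^ 2 * (3 * δ) := by
        apply mul_le_mul hw (by linarith) (by positivity) (by positivity)
      nlinarith
    linarith
  have hmain : c * (δ / 2) ^ 2 ≤ c * ‖u‖ ^ 2 := by gcongr
  have : 3 * ‖T‖ * δ ^ 3 < c * (δ / 2) ^ 2 := by nlinarith [pow_pos hδ 2]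
  rw [hsplit]
  linarith [neg_abs_le ⟪d - u, T d⟫, neg_abs_le ⟪u, T (d - u)⟫]

theorem Matrix.exists_dotProduct_mulVec_self_pos_of_vecNorm_sub_le_sq {ι : Type*} [Fintype ι]
    [DecidableEq ι] (L : Matrix ι ι ℝ) {c : ℝ} (hc : 0 < c) :
    ∃ ε > 0, ∀ d u : ι → ℝ, c * (u ⬝ᵥ u) ≤ u ⬝ᵥ (L *ᵥ u) → vecNorm (d - u) ≤ vecNorm d ^ 2 →
      d ≠ 0 → vecNorm d < ε → 0 < d ⬝ᵥ (L *ᵥ d) := by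
  obtain ⟨ε, hε, h⟩ :=
    (toEuclideanCLM (𝕜 := ℝ) L).exists_inner_map_self_pos_of_norm_sub_le_sq hc
  refine ⟨ε, hε, fun d u hu hdu hd hlt => ?_⟩
  simp only [vecNorm_eq_norm_toLp] at hdu hlt
  have := h (WithLp.toLp 2 d) (WithLp.toLp 2 u)
    (by rwa [EuclideanSpace.norm_toLp_sq, inner_toEuclideanCLM]) (by rwa [← WithLp.toLp_sub])
    (by simpa using hd) hlt
  rwa [inner_toEuclideanCLM] at this

section Tangent

variable {N : ℕ} {x : Fin N × Fin 2 → ℝ}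

theorem tangentZmat_mulVec (s : Fin N → ℝ) (p : Fin N × Fin 2) :
    (tangentZmat x *ᵥ s) p = (if p.2 = 0 then -x (p.1, 1) else x (p.1, 0)) * s p.1 := by
  simp [tangentZmat, mulVec, dotProduct]

theorem tangentZmat_transpose_mulVec (d : Fin N × Fin 2 → ℝ) (i : Fin N) :
    ((tangentZmat x)ᵀ *ᵥ d) i = -x (i, 1) * d (i, 0) + x (i, 0) * d (i, 1) := by
  simp [tangentZmat, mulVec, dotProduct, Fintype.sum_prod_type]

theorem tangentZmat_transpose_mul_diagonal_mul (hx : ∀ i, x (i, 0) ^ 2 + x (i, 1) ^ 2 = 1)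
    (γ : Fin N → ℝ) :
    (tangentZmat x)ᵀ * diagonal (fun p : Fin N × Fin 2 => γ p.1) * tangentZmat x =
      diagonal γ := by
  refine Matrix.ext fun i j => ?_
  simp only [mul_apply (M := _ * _), mul_diagonal, transpose_apply, Fintype.sum_prod_type,
    Fin.sum_univ_two]
  by_cases hij : i = j
  · subst hij
    simp [tangentZmat, Finset.sum_add_distrib]
    linear_combination γ i * hx i
  · simp [tangentZmat, Finset.sum_add_distrib, Ne.symm hij, hij]

theorem sub_tangentZmat_mulVec_transpose_mulVec (hx : ∀ i, x (i, 0) ^ 2 + x (i, 1) ^ 2 = 1)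
    (d : Fin N × Fin 2 → ℝ) :
    d - tangentZmat x *ᵥ ((tangentZmat x)ᵀ *ᵥ d) =
      fun p => (x (p.1, 0) * d (p.1, 0) + x (p.1, 1) * d (p.1, 1)) * x p := by
  ext ⟨i, j⟩
  fin_cases j <;> simp only [Pi.sub_apply, tangentZmat_mulVec, tangentZmat_transpose_mulVec] <;>
    simp
  · linear_combination -d (i, 0) * hx i
  · linear_combination -d (i, 1) * hx i

theorem dotProduct_diagonal_fst_mulVec_self (hx : ∀ i, x (i, 0) ^ 2 + x (i, 1) ^ 2 = 1)
    (γ : Fin N → ℝ) : x ⬝ᵥ (diagonal (fun p : Fin N × Fin 2 => γ p.1) *ᵥ x) = ∑ i, γ i := by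
  simp only [mulVec_diagonal, dotProduct, Fintype.sum_prod_type, Fin.sum_univ_two]
  exact Finset.sum_congr rfl fun i _ => by linear_combination γ i * hx i

theorem vecNorm_sub_tangentZmat_mulVec_le (hx : ∀ i, x (i, 0) ^ 2 + x (i, 1) ^ 2 = 1)
    {y : Fin N × Fin 2 → ℝ} (hy : ∀ i, y (i, 0) ^ 2 + y (i, 1) ^ 2 = 1) :
    vecNorm ((y - x) - tangentZmat x *ᵥ ((tangentZmat x)ᵀ *ᵥ (y - x))) ≤
      vecNorm (y - x) ^ 2 := by
  rw [sub_tangentZmat_mulVec_transpose_mulVec hx]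
  set d := y - x
  set a : Fin N → ℝ := fun i => d (i, 0) ^ 2 + d (i, 1) ^ 2
  have hnormal : ∀ i, x (i, 0) * d (i, 0) + x (i, 1) * d (i, 1) = -(a i / 2) := fun i => by
    simp only [a, d, Pi.sub_apply]; linear_combination (hy i - hx i) / 2
  simp only [hnormal]
  rw [← pow_le_pow_iff_left₀ (vecNorm_nonneg _) (by positivity) two_ne_zero, ← pow_mul,
    vecNorm_sq, pow_mul, vecNorm_sq, dotProduct_self_eq_sum_sq, dotProduct_self_eq_sum_sq,
    Fintype.sum_prod_type, Fintype.sum_prod_type]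
  simp only [Fin.sum_univ_two]
  calc ∑ i, ((-(a i / 2) * x (i, 0)) ^ 2 + (-(a i / 2) * x (i, 1)) ^ 2)
      = ∑ i, a i ^ 2 / 4 := Finset.sum_congr rfl fun i _ => by
        linear_combination (a i ^ 2 / 4) * hx i
    _ ≤ ∑ i, a i ^ 2 := Finset.sum_le_sum fun i _ => by nlinarith [sq_nonneg (a i)]
    _ ≤ (∑ i, a i) ^ 2 := Finset.sum_sq_le_sq_sum_of_nonneg fun i _ => by positivity

end Tangent

theorem second_order_sufficient {M N : ℕ}
    (A : Matrix (Fin M × Fin 2) (Fin N × Fin 2) ℝ) (b : Fin M × Fin 2 → ℝ)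
    (x : Fin N × Fin 2 → ℝ) (hx : ∀ i, x (i, 0) ^ 2 + x (i, 1) ^ 2 = 1)
    (γ : Fin N → ℝ)
    (hstat : Aᵀ *ᵥ (A *ᵥ x - b) = fun p => γ p.1 * x p)
    (hH : ((tangentZmat x)ᵀ * (Aᵀ * A) * tangentZmat x - Matrix.diagonal γ).PosDef) :
    ∃ ε > 0, ∀ y : Fin N × Fin 2 → ℝ,
      (∀ i, y (i, 0) ^ 2 + y (i, 1) ^ 2 = 1) → y ≠ x → vecNorm (y - x) < ε →
        (1 / 2) * ∑ p, (A *ᵥ x - b) p ^ 2 < (1 / 2) * ∑ p, (A *ᵥ y - b) p ^ 2 := by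
  set Z := tangentZmat x
  set L := Aᵀ * A - diagonal (fun p : Fin N × Fin 2 => γ p.1)
  have hZLZ : Zᵀ * L * Z = Zᵀ * (Aᵀ * A) * Z - diagonal γ := by
    simp only [L, Z, Matrix.mul_sub, Matrix.sub_mul, tangentZmat_transpose_mul_diagonal_mul hx]
  have hZZ : Zᵀ * Z = 1 := by
    simpa using tangentZmat_transpose_mul_diagonal_mul hx (fun _ => 1)
  obtain ⟨c, hc, hcoer⟩ := hH.exists_pos_mul_dotProduct_self_le
  obtain ⟨ε, hε, hpos⟩ := L.exists_dotProduct_mulVec_self_pos_of_vecNorm_sub_le_sq hc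
  refine ⟨ε, hε, fun y hy hne hlt => ?_⟩
  have htangent (s : Fin N → ℝ) : c * (Z *ᵥ s ⬝ᵥ Z *ᵥ s) ≤ Z *ᵥ s ⬝ᵥ (L *ᵥ (Z *ᵥ s)) := by
    have hnorm : Z *ᵥ s ⬝ᵥ Z *ᵥ s = s ⬝ᵥ s := by
      simpa [hZZ] using mulVec_dotProduct_mulVec_mulVec Z 1 s
    rw [hnorm, mulVec_dotProduct_mulVec_mulVec, hZLZ]
    exact hcoer s
  have hQ : 0 < (y - x) ⬝ᵥ (L *ᵥ (y - x)) :=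
    hpos _ _ (htangent _) (vecNorm_sub_tangentZmat_mulVec_le hx hy) (sub_ne_zero.2 hne) hlt
  have hobj := residual_dotProduct_self_eq_add A b (fun p => γ p.1) (y := y)
    (by rw [hstat]; ext p; simp [mulVec_diagonal])
    (by rw [dotProduct_diagonal_fst_mulVec_self hx, dotProduct_diagonal_fst_mulVec_self hy])
  rw [dotProduct_self_eq_sum_sq, dotProduct_self_eq_sum_sq] at hobj
  linarith
end

section
/- Let x* ∈ C be a local minimum of min_{x∈C} ½‖Ax - b‖² with Lagrange multiplier γ. Then the reduced Hessian H = Zᵀ Aᵀ A Z - diag(γ) is positive semidefinite, where Z is the tangent-space basis at x*. -/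
/-!
Along the curve `s ↦ x + 2s·d(s)` with `d(s)ᵢ = (zᵢ vᵢ - s zᵢ² xᵢ) / (1 + s² zᵢ²)`, the Cayley
parametrisation of the circles through `xᵢ` in the directions `zᵢ vᵢ`, the stationarity condition
turns the increase of `‖A y - b‖²` into exactly `4 s² G(s)`, where
`G(s) = ‖A d(s)‖² - Σᵢ γᵢ zᵢ² / (1 + s² zᵢ²)` is continuous. Local minimality forces `G(s) ≥ 0`
for small `s ≠ 0`, hence `G(0) = ‖A Z z‖² - Σᵢ γᵢ zᵢ² = zᵀ H z ≥ 0`.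
-/

open Matrix

open Filter Topology

lemma nonneg_of_eventually_sq_mul_nonneg {G : ℝ → ℝ} (hG : ContinuousAt G 0)
    (h : ∀ᶠ s in 𝓝 0, 0 ≤ s ^ 2 * G s) : 0 ≤ G 0 := by
  refine ge_of_tendsto (hG.tendsto.mono_left (nhdsWithin_le_nhds (s := {0}ᶜ))) ?_
  filter_upwards [nhdsWithin_le_nhds h, self_mem_nhdsWithin] with s hs (hs0 : s ≠ 0)
  exact nonneg_of_mul_nonneg_right hs (by positivity)

lemma continuous_vecNorm {ι : Type*} [Fintype ι] : Continuous (vecNorm : (ι → ℝ) → ℝ) := by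
  unfold vecNorm
  fun_prop

lemma sum_sq_mulVec_sub_eq {m n : Type*} [Fintype m] [Fintype n] (A : Matrix m n ℝ)
    (b : m → ℝ) (x y : n → ℝ) :
    ∑ p, (A *ᵥ y - b) p ^ 2 = ∑ p, (A *ᵥ x - b) p ^ 2
      + 2 * (Aᵀ *ᵥ (A *ᵥ x - b)) ⬝ᵥ (y - x) + ∑ p, (A *ᵥ (y - x)) p ^ 2 := by
  rw [mulVec_transpose, ← dotProduct_mulVec, mulVec_sub]
  simp only [dotProduct, Pi.sub_apply, Finset.mul_sum, ← Finset.sum_add_distrib]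
  exact Finset.sum_congr rfl fun p _ => by ring

lemma dotProduct_transpose_mul_mul_mulVec {m n k : Type*} [Fintype m] [Fintype n] [Fintype k]
    (A : Matrix m n ℝ) (B : Matrix n k ℝ) (z : k → ℝ) :
    z ⬝ᵥ (Bᵀ * (Aᵀ * A) * B) *ᵥ z = ∑ p, (A *ᵥ (B *ᵥ z)) p ^ 2 := by
  rw [← mulVec_mulVec, ← mulVec_mulVec, ← mulVec_mulVec, dotProduct_mulVec, vecMul_transpose,
    dotProduct_mulVec, vecMul_transpose]
  simp only [dotProduct, sq]

section Cayley

variable {ι : Type*}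

/-- Rotation by a quarter turn in every plane `{i} × Fin 2`: the vector `vᵢ` of the paper. -/
def quarterTurn (x : ι × Fin 2 → ℝ) : ι × Fin 2 → ℝ :=
  fun p => if p.2 = 0 then -x (p.1, 1) else x (p.1, 0)

lemma tangentZmat_mulVec_s17 {N : ℕ} (x : Fin N × Fin 2 → ℝ) (z : Fin N → ℝ) :
    tangentZmat x *ᵥ z = fun p => z p.1 * quarterTurn x p := by
  funext p
  simp only [mulVec, dotProduct, tangentZmat, quarterTurn, ite_mul, zero_mul,
    Finset.sum_ite_eq, Finset.mem_univ, if_true]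
  split_ifs <;> ring

/-- The difference quotient `(y(s) - x) / (2s)` of the Cayley curve `cayleyCurve`. -/
noncomputable def cayleyDir (x : ι × Fin 2 → ℝ) (z : ι → ℝ) (s : ℝ) : ι × Fin 2 → ℝ :=
  fun p => (z p.1 * quarterTurn x p - s * z p.1 ^ 2 * x p) / (1 + s ^ 2 * z p.1 ^ 2)

noncomputable def cayleyCurve (x : ι × Fin 2 → ℝ) (z : ι → ℝ) (s : ℝ) : ι × Fin 2 → ℝ :=
  x + (2 * s) • cayleyDir x z s

lemma cayleyCurve_sub (x : ι × Fin 2 → ℝ) (z : ι → ℝ) (s : ℝ) :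
    cayleyCurve x z s - x = (2 * s) • cayleyDir x z s :=
  add_sub_cancel_left _ _

lemma cayleyCurve_sq_add_sq {x : ι × Fin 2 → ℝ} (hx : ∀ i, x (i, 0) ^ 2 + x (i, 1) ^ 2 = 1)
    (z : ι → ℝ) (s : ℝ) (i : ι) :
    cayleyCurve x z s (i, 0) ^ 2 + cayleyCurve x z s (i, 1) ^ 2 = 1 := by
  have hq : 1 + s ^ 2 * z i ^ 2 ≠ 0 := by positivity
  simp only [cayleyCurve, cayleyDir, quarterTurn, Pi.add_apply, Pi.smul_apply, smul_eq_mul]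
  simp only [↓reduceIte, one_ne_zero]
  field_simp
  linear_combination (1 + s ^ 2 * z i ^ 2) ^ 2 * hx i

lemma continuous_cayleyDir (x : ι × Fin 2 → ℝ) (z : ι → ℝ) :
    Continuous (cayleyDir x z) :=
  continuous_pi fun p => (by fun_prop : Continuous fun s : ℝ => _).div (by fun_prop)
    fun s => by positivity

lemma cayleyDir_zero {N : ℕ} (x : Fin N × Fin 2 → ℝ) (z : Fin N → ℝ) :
    cayleyDir x z 0 = tangentZmat x *ᵥ z := by
  rw [tangentZmat_mulVec_s17]
  funext p
  simp [cayleyDir]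

variable [Fintype ι]

lemma dotProduct_cayleyDir {x : ι × Fin 2 → ℝ} (hx : ∀ i, x (i, 0) ^ 2 + x (i, 1) ^ 2 = 1)
    (γ : ι → ℝ) (z : ι → ℝ) (s : ℝ) :
    (fun p => γ p.1 * x p) ⬝ᵥ cayleyDir x z s
      = -(s * ∑ i, γ i * z i ^ 2 / (1 + s ^ 2 * z i ^ 2)) := by
  rw [Finset.mul_sum, ← Finset.sum_neg_distrib, dotProduct, Fintype.sum_prod_type]
  refine Finset.sum_congr rfl fun i _ => ?_
  simp only [Fin.sum_univ_two, cayleyDir, quarterTurn]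
  simp only [↓reduceIte, one_ne_zero]
  field_simp
  linear_combination (-(γ i * s * z i ^ 2)) * hx i

/-- `G(s)` of the header. -/
noncomputable def cayleyQuotient {m : Type*} [Fintype m] (A : Matrix m (ι × Fin 2) ℝ)
    (γ : ι → ℝ) (x : ι × Fin 2 → ℝ) (z : ι → ℝ) (s : ℝ) : ℝ :=
  ∑ p, (A *ᵥ cayleyDir x z s) p ^ 2 - ∑ i, γ i * z i ^ 2 / (1 + s ^ 2 * z i ^ 2)

lemma continuous_cayleyQuotient {m : Type*} [Fintype m] (A : Matrix m (ι × Fin 2) ℝ)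
    (γ : ι → ℝ) (x : ι × Fin 2 → ℝ) (z : ι → ℝ) : Continuous (cayleyQuotient A γ x z) :=
  (continuous_finsetSum _ fun p _ => ((continuous_apply p).comp
      (continuous_const.matrix_mulVec (continuous_cayleyDir x z))).pow 2).sub
    (continuous_finsetSum _ fun i _ => continuous_const.div (by fun_prop) fun s => by positivity)

lemma sum_sq_mulVec_cayleyCurve_sub_eq {m : Type*} [Fintype m] (A : Matrix m (ι × Fin 2) ℝ)
    (b : m → ℝ) {x : ι × Fin 2 → ℝ} (hx : ∀ i, x (i, 0) ^ 2 + x (i, 1) ^ 2 = 1) {γ : ι → ℝ}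
    (hstat : Aᵀ *ᵥ (A *ᵥ x - b) = fun p => γ p.1 * x p) (z : ι → ℝ) (s : ℝ) :
    ∑ p, (A *ᵥ cayleyCurve x z s - b) p ^ 2
      = ∑ p, (A *ᵥ x - b) p ^ 2 + 4 * s ^ 2 * cayleyQuotient A γ x z s := by
  rw [cayleyQuotient, sum_sq_mulVec_sub_eq A b x, hstat, cayleyCurve_sub, dotProduct_smul,
    dotProduct_cayleyDir hx, mulVec_smul]
  simp only [Pi.smul_apply, smul_eq_mul, mul_pow, ← Finset.mul_sum]
  ring

lemma eventually_vecNorm_cayleyCurve_sub_lt (x : ι × Fin 2 → ℝ) (z : ι → ℝ) {ε : ℝ}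
    (hε : 0 < ε) : ∀ᶠ s in 𝓝 0, vecNorm (cayleyCurve x z s - x) < ε := by
  simp only [cayleyCurve_sub]
  refine (Continuous.continuousAt ?_).eventually_lt continuousAt_const (by simpa [vecNorm])
  exact continuous_vecNorm.comp ((continuous_const.mul continuous_id).smul
    (continuous_cayleyDir x z))

end Cayley

lemma cayleyQuotient_zero {M N : ℕ} (A : Matrix (Fin M × Fin 2) (Fin N × Fin 2) ℝ)
    (γ : Fin N → ℝ) (x : Fin N × Fin 2 → ℝ) (z : Fin N → ℝ) :
    cayleyQuotient A γ x z 0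
      = z ⬝ᵥ ((tangentZmat x)ᵀ * (Aᵀ * A) * tangentZmat x - diagonal γ) *ᵥ z := by
  rw [sub_mulVec, dotProduct_sub, dotProduct_transpose_mul_mul_mulVec, cayleyQuotient,
    cayleyDir_zero]
  simp [dotProduct, mulVec_diagonal, sq, mul_left_comm]

theorem second_order_necessary {M N : ℕ}
    (A : Matrix (Fin M × Fin 2) (Fin N × Fin 2) ℝ) (b : Fin M × Fin 2 → ℝ)
    (x : Fin N × Fin 2 → ℝ) (hx : ∀ i, x (i, 0) ^ 2 + x (i, 1) ^ 2 = 1)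
    (γ : Fin N → ℝ)
    (hstat : Aᵀ *ᵥ (A *ᵥ x - b) = fun p => γ p.1 * x p)
    (hmin : ∃ ε > 0, ∀ y : Fin N × Fin 2 → ℝ,
      (∀ i, y (i, 0) ^ 2 + y (i, 1) ^ 2 = 1) → vecNorm (y - x) < ε →
        (1 / 2) * ∑ p, (A *ᵥ x - b) p ^ 2 ≤ (1 / 2) * ∑ p, (A *ᵥ y - b) p ^ 2) :
    ((tangentZmat x)ᵀ * (Aᵀ * A) * tangentZmat x - Matrix.diagonal γ).PosSemidef := by
  obtain ⟨ε, hε, hloc⟩ := hmin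
  have hHerm : ((tangentZmat x)ᵀ * (Aᵀ * A) * tangentZmat x - diagonal γ).IsHermitian := by
    simp only [← conjTranspose_eq_transpose_of_trivial]
    exact (isHermitian_conjTranspose_mul_mul _ (isHermitian_conjTranspose_mul_self A)).sub
      (isHermitian_diagonal γ)
  refine posSemidef_iff_dotProduct_mulVec.mpr ⟨hHerm, fun z => ?_⟩
  rw [star_trivial, ← cayleyQuotient_zero A γ]
  refine nonneg_of_eventually_sq_mul_nonneg (continuous_cayleyQuotient A γ x z).continuousAt ?_
  filter_upwards [eventually_vecNorm_cayleyCurve_sub_lt x z hε] with s hs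
  have hle := hloc _ (cayleyCurve_sq_add_sq hx z s) hs
  rw [sum_sq_mulVec_cayleyCurve_sub_eq A b hx hstat] at hle
  linarith
end
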